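/- arXiv:1812.00444 — 2 statements merged into one kernel-verified Lean document; each statement's English description precedes it below -/
import Mathlib

section
/- The restriction of ψ to ℝ × (0,∞), where ψ(ξ,η) = ((ξ²−η²)/√(2(ξ²+η²)), 2ξη/√(2(ξ²+η²))), is a symplectomorphism onto ℝ² \ ([0,∞)×{0}) with respect to the standard symplectic (area) form on both sides; i.e. it is a smooth diffeomorphism whose Jacobian determinant equals 1 everywhere. -/
open Set

noncomputable def psiMap (p : ℝ × ℝ) : ℝ × ℝ :=
  ((p.1 ^ 2 - p.2 ^ 2) / Real.sqrt (2 * (p.1 ^ 2 + p.2 ^ 2)),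
    2 * p.1 * p.2 / Real.sqrt (2 * (p.1 ^ 2 + p.2 ^ 2)))

noncomputable def mkCLM (a b c d : ℝ) : ℝ × ℝ →L[ℝ] ℝ × ℝ :=
  ((a • ContinuousLinearMap.fst ℝ ℝ ℝ + b • ContinuousLinearMap.snd ℝ ℝ ℝ)).prod
    ((c • ContinuousLinearMap.fst ℝ ℝ ℝ + d • ContinuousLinearMap.snd ℝ ℝ ℝ))

lemma det_mkCLM (a b c d : ℝ) :
    LinearMap.det (mkCLM a b c d).toLinearMap = a * d - b * c := by
  rw [← LinearMap.det_toMatrix (Module.Basis.finTwoProd ℝ), Matrix.det_fin_two]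
  simp [LinearMap.toMatrix_apply, mkCLM]

noncomputable def psiInv (q : ℝ × ℝ) : ℝ × ℝ :=
  (q.2 * Real.sqrt (Real.sqrt (q.1 ^ 2 + q.2 ^ 2)) /
      Real.sqrt (Real.sqrt (q.1 ^ 2 + q.2 ^ 2) - q.1),
    Real.sqrt (Real.sqrt (q.1 ^ 2 + q.2 ^ 2)) *
      Real.sqrt (Real.sqrt (q.1 ^ 2 + q.2 ^ 2) - q.1))

lemma target_pos {a b : ℝ} (h : ¬ (0 ≤ a ∧ b = 0)) :
    0 < Real.sqrt (a ^ 2 + b ^ 2) ∧ a < Real.sqrt (a ^ 2 + b ^ 2) := by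
  by_cases hb : b = 0
  · subst hb
    have ha : a < 0 := by
      by_contra h'
      exact h ⟨le_of_not_gt h', rfl⟩
    have hs : Real.sqrt (a ^ 2 + 0 ^ 2) = -a := by
      rw [show a ^ 2 + 0 ^ 2 = a ^ 2 by ring, Real.sqrt_sq_eq_abs, abs_of_neg ha]
    rw [hs]
    constructor <;> linarith
  · have hb2 : 0 < b ^ 2 := by positivity
    have h1 : |a| < Real.sqrt (a ^ 2 + b ^ 2) := by
      rw [← Real.sqrt_sq_eq_abs]
      exact Real.sqrt_lt_sqrt (by positivity) (by nlinarith)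
    exact ⟨lt_of_le_of_lt (abs_nonneg a) h1, lt_of_le_of_lt (le_abs_self a) h1⟩

lemma psi_right_inv {a b : ℝ} (h : ¬ (0 ≤ a ∧ b = 0)) : psiMap (psiInv (a, b)) = (a, b) := by
  obtain ⟨hr, hra'⟩ := target_pos h
  set r := Real.sqrt (a ^ 2 + b ^ 2) with hrdef
  have hra : 0 < r - a := sub_pos.mpr hra'
  set A := Real.sqrt r with hAdef
  set B := Real.sqrt (r - a) with hBdef
  have hApos : 0 < A := Real.sqrt_pos.mpr hr
  have hBpos : 0 < B := Real.sqrt_pos.mpr hra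
  have hA2 : A ^ 2 = r := Real.sq_sqrt hr.le
  have hB2 : B ^ 2 = r - a := Real.sq_sqrt hra.le
  have hr2 : r ^ 2 = a ^ 2 + b ^ 2 := Real.sq_sqrt (by positivity)
  have hinv : psiInv (a, b) = (b * A / B, A * B) := rfl
  rw [hinv]
  have hξ2 : (b * A / B) ^ 2 = b ^ 2 * r / (r - a) := by
    rw [div_pow, mul_pow, hA2, hB2]
  have hη2 : (A * B) ^ 2 = r * (r - a) := by rw [mul_pow, hA2, hB2]
  have hsum : 2 * ((b * A / B) ^ 2 + (A * B) ^ 2) = (2 * r) ^ 2 := by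
    rw [hξ2, hη2]
    field_simp
    linear_combination (-1) * hr2
  have hs' : Real.sqrt (2 * ((b * A / B) ^ 2 + (A * B) ^ 2)) = 2 * r := by
    rw [hsum]; exact Real.sqrt_sq (by positivity)
  unfold psiMap
  simp only
  rw [hs']
  refine Prod.ext ?_ ?_
  · show ((b * A / B) ^ 2 - (A * B) ^ 2) / (2 * r) = a
    rw [hξ2, hη2]
    field_simp
    linear_combination (-1) * hr2
  · show 2 * (b * A / B) * (A * B) / (2 * r) = b
    field_simp
    linear_combination b * hA2

lemma psi_left_inv {x y : ℝ} (hy : 0 < y) : psiInv (psiMap (x, y)) = (x, y) := by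
  have hpos : 0 < 2 * (x ^ 2 + y ^ 2) := by positivity
  set s := Real.sqrt (2 * (x ^ 2 + y ^ 2)) with hsdef
  have hspos : 0 < s := Real.sqrt_pos.mpr hpos
  have hs2 : s ^ 2 = 2 * (x ^ 2 + y ^ 2) := Real.sq_sqrt hpos.le
  set a := (x ^ 2 - y ^ 2) / s with hadef
  set b := 2 * x * y / s with hbdef
  have hpsi : psiMap (x, y) = (a, b) := rfl
  rw [hpsi]
  have hab : a ^ 2 + b ^ 2 = (s / 2) ^ 2 := by
    rw [hadef, hbdef]
    field_simp
    linear_combination (-(s ^ 2 + 2 * (x ^ 2 + y ^ 2))) * hs2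
  have hrr : Real.sqrt (a ^ 2 + b ^ 2) = s / 2 := by
    rw [hab]; exact Real.sqrt_sq (by positivity)
  have hra : Real.sqrt (a ^ 2 + b ^ 2) - a = 2 * y ^ 2 / s := by
    rw [hrr, hadef]
    field_simp
    linear_combination hs2
  have hS : 0 < Real.sqrt s := Real.sqrt_pos.mpr hspos
  have hS2 : Real.sqrt s ^ 2 = s := Real.sq_sqrt hspos.le
  have h2 : (0:ℝ) < Real.sqrt 2 := by positivity
  have h22 : Real.sqrt 2 ^ 2 = 2 := Real.sq_sqrt (by norm_num)
  have hS2' : Real.sqrt s * Real.sqrt s = s := Real.mul_self_sqrt hspos.le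
  have h22' : Real.sqrt 2 * Real.sqrt 2 = 2 := Real.mul_self_sqrt (by norm_num)
  have hsq1 : Real.sqrt (Real.sqrt (a ^ 2 + b ^ 2)) = Real.sqrt s / Real.sqrt 2 := by
    rw [hrr, Real.sqrt_div hspos.le]
  have hsq2 : Real.sqrt (Real.sqrt (a ^ 2 + b ^ 2) - a) = Real.sqrt 2 * y / Real.sqrt s := by
    rw [hra, Real.sqrt_div (by positivity), Real.sqrt_mul (by norm_num), Real.sqrt_sq hy.le]
  unfold psiInv
  simp only
  rw [hsq1, hsq2, hbdef]
  refine Prod.ext ?_ ?_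
  · show 2 * x * y / s * (Real.sqrt s / Real.sqrt 2) / (Real.sqrt 2 * y / Real.sqrt s) = x
    field_simp
    linear_combination (2 * x) * hS2' - (x * s) * h22'
  · show Real.sqrt s / Real.sqrt 2 * (Real.sqrt 2 * y / Real.sqrt s) = y
    field_simp

lemma hasFDerivAt_psi (x y : ℝ) (h : 2 * (x ^ 2 + y ^ 2) ≠ 0) :
    HasFDerivAt psiMap
      (mkCLM (2*x*(x^2+3*y^2) / (Real.sqrt (2*(x^2+y^2)))^3)
             (-(2*y*(3*x^2+y^2)) / (Real.sqrt (2*(x^2+y^2)))^3)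
             (4*y^3 / (Real.sqrt (2*(x^2+y^2)))^3)
             (4*x^3 / (Real.sqrt (2*(x^2+y^2)))^3)) (x, y) := by
  have hs : Real.sqrt (2*(x^2+y^2)) ≠ 0 := by positivity
  have h1 : HasFDerivAt (fun p : ℝ × ℝ => p.1) (ContinuousLinearMap.fst ℝ ℝ ℝ) (x, y) :=
    hasFDerivAt_fst
  have h2 : HasFDerivAt (fun p : ℝ × ℝ => p.2) (ContinuousLinearMap.snd ℝ ℝ ℝ) (x, y) :=
    hasFDerivAt_snd
  have h1sq : HasFDerivAt (fun p : ℝ × ℝ => p.1 ^ 2)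
      ((x • ContinuousLinearMap.fst ℝ ℝ ℝ) + (x • ContinuousLinearMap.fst ℝ ℝ ℝ)) (x, y) := by
    simp only [pow_two]; exact h1.mul h1
  have h2sq : HasFDerivAt (fun p : ℝ × ℝ => p.2 ^ 2)
      ((y • ContinuousLinearMap.snd ℝ ℝ ℝ) + (y • ContinuousLinearMap.snd ℝ ℝ ℝ)) (x, y) := by
    simp only [pow_two]; exact h2.mul h2
  have ht := (h1sq.add h2sq).const_mul (2:ℝ)
  have hS := (Real.hasDerivAt_sqrt h).comp_hasFDerivAt (x, y) ht
  have hu := h1sq.sub h2sq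
  have hv := ((h1.mul h2).const_mul (2:ℝ))
  have hSinv := ((Real.hasDerivAt_sqrt h).inv hs).comp_hasFDerivAt (x, y) ht
  have hf1 := hu.mul hSinv
  have hf2 := hv.mul hSinv
  convert HasFDerivAt.prodMk hf1 hf2 using 1
  · rfl
  · rfl
  · rfl
  · funext p
    simp [psiMap, div_eq_mul_inv, Function.comp]
    exact Or.inl (by ring)
  apply ContinuousLinearMap.ext
  rintro ⟨u, v⟩
  have hsq : (Real.sqrt (2*(x^2+y^2)))^2 = 2*(x^2+y^2) := Real.sq_sqrt (by positivity)
  set s := Real.sqrt (2*(x^2+y^2)) with hsdef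
  simp only [mkCLM, ContinuousLinearMap.prod_apply, ContinuousLinearMap.add_apply,
    ContinuousLinearMap.smul_apply, ContinuousLinearMap.coe_fst', ContinuousLinearMap.coe_snd',
    ContinuousLinearMap.coe_comp', Function.comp_apply, ContinuousLinearMap.coe_smul',
    Pi.smul_apply, ContinuousLinearMap.sub_apply, smul_eq_mul]
  have hmul : Real.sqrt 2 * Real.sqrt (x^2+y^2) = s := by
    rw [hsdef, ← Real.sqrt_mul (by norm_num)]
  refine Prod.ext ?_ ?_
  · show _ = _
    field_simp
    simp only [Pi.inv_apply, Pi.sub_apply, Pi.add_apply, Pi.mul_apply]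
    rw [← hsdef]
    field_simp
    linear_combination (-(2*(x*u - y*v))) * hsq
  · show _ = _
    field_simp
    simp only [Pi.inv_apply, Pi.sub_apply, Pi.add_apply, Pi.mul_apply]
    rw [← hsdef]
    field_simp
    linear_combination (-(2*(x*v + y*u))) * hsq


lemma psi_smooth : ContDiffOn ℝ (⊤ : ℕ∞) psiMap {p : ℝ × ℝ | 0 < p.2} := by
  intro p hp
  have hp2 : 0 < p.2 := hp
  have hne : 2 * (p.1 ^ 2 + p.2 ^ 2) ≠ 0 := by positivity
  have hpoly : ContDiff ℝ (⊤ : ℕ∞) (fun p : ℝ × ℝ => 2 * (p.1 ^ 2 + p.2 ^ 2)) :=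
    (contDiff_const.mul ((contDiff_fst.pow 2).add (contDiff_snd.pow 2)))
  have hsqrt : ContDiffAt ℝ (⊤ : ℕ∞) (fun p : ℝ × ℝ => Real.sqrt (2 * (p.1 ^ 2 + p.2 ^ 2))) p :=
    hpoly.contDiffAt.sqrt hne
  have hsne : Real.sqrt (2 * (p.1 ^ 2 + p.2 ^ 2)) ≠ 0 := by positivity
  have h1 : ContDiffAt ℝ (⊤ : ℕ∞) (fun p : ℝ × ℝ => (p.1 ^ 2 - p.2 ^ 2) /
      Real.sqrt (2 * (p.1 ^ 2 + p.2 ^ 2))) p :=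
    (((contDiff_fst.pow 2).sub (contDiff_snd.pow 2)).contDiffAt).div hsqrt hsne
  have h2 : ContDiffAt ℝ (⊤ : ℕ∞) (fun p : ℝ × ℝ => 2 * p.1 * p.2 /
      Real.sqrt (2 * (p.1 ^ 2 + p.2 ^ 2))) p :=
    (((contDiff_const.mul contDiff_fst).mul contDiff_snd).contDiffAt).div hsqrt hsne
  exact (h1.prodMk h2).contDiffWithinAt

lemma psiInv_smooth : ContDiffOn ℝ (⊤ : ℕ∞) psiInv {p : ℝ × ℝ | ¬ (0 ≤ p.1 ∧ p.2 = 0)} := by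
  intro q hq
  have hq' : ¬ (0 ≤ q.1 ∧ q.2 = 0) := hq
  obtain ⟨hr, hra'⟩ := target_pos hq'
  have hne : q.1 ^ 2 + q.2 ^ 2 ≠ 0 := by
    intro h0
    rw [h0, Real.sqrt_zero] at hr
    exact lt_irrefl 0 hr
  have hpoly : ContDiff ℝ (⊤ : ℕ∞) (fun q : ℝ × ℝ => q.1 ^ 2 + q.2 ^ 2) :=
    (contDiff_fst.pow 2).add (contDiff_snd.pow 2)
  have hrcd : ContDiffAt ℝ (⊤ : ℕ∞) (fun q : ℝ × ℝ => Real.sqrt (q.1 ^ 2 + q.2 ^ 2)) q :=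
    hpoly.contDiffAt.sqrt hne
  have hr_ne : Real.sqrt (q.1 ^ 2 + q.2 ^ 2) ≠ 0 := ne_of_gt hr
  have hracd : ContDiffAt ℝ (⊤ : ℕ∞)
      (fun q : ℝ × ℝ => Real.sqrt (q.1 ^ 2 + q.2 ^ 2) - q.1) q :=
    hrcd.sub contDiff_fst.contDiffAt
  have hra_ne : Real.sqrt (q.1 ^ 2 + q.2 ^ 2) - q.1 ≠ 0 := ne_of_gt (sub_pos.mpr hra')
  have hsqrtr : ContDiffAt ℝ (⊤ : ℕ∞)
      (fun q : ℝ × ℝ => Real.sqrt (Real.sqrt (q.1 ^ 2 + q.2 ^ 2))) q :=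
    hrcd.sqrt hr_ne
  have hsqrtra : ContDiffAt ℝ (⊤ : ℕ∞)
      (fun q : ℝ × ℝ => Real.sqrt (Real.sqrt (q.1 ^ 2 + q.2 ^ 2) - q.1)) q :=
    hracd.sqrt hra_ne
  have hsra_ne : Real.sqrt (Real.sqrt (q.1 ^ 2 + q.2 ^ 2) - q.1) ≠ 0 :=
    ne_of_gt (Real.sqrt_pos.mpr (sub_pos.mpr hra'))
  have h1 := (contDiff_snd.contDiffAt.mul hsqrtr).div hsqrtra hsra_ne
  have h2 := hsqrtr.mul hsqrtra
  exact (h1.prodMk h2).contDiffWithinAt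

lemma psi_mapsTo {x y : ℝ} (hy : 0 < y) :
    ¬ (0 ≤ (psiMap (x, y)).1 ∧ (psiMap (x, y)).2 = 0) := by
  have hpos : 0 < 2 * (x ^ 2 + y ^ 2) := by positivity
  have hspos : 0 < Real.sqrt (2 * (x ^ 2 + y ^ 2)) := Real.sqrt_pos.mpr hpos
  rintro ⟨h1, h2⟩
  unfold psiMap at h1 h2
  simp only at h1 h2
  rw [div_eq_zero_iff] at h2
  rcases h2 with h2 | h2
  · have hx : x = 0 := by
      rcases mul_eq_zero.mp h2 with h | h
      · rcases mul_eq_zero.mp h with h | h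
        · norm_num at h
        · exact h
      · exact absurd h (ne_of_gt hy)
    rw [hx] at h1
    have : (0 ^ 2 - y ^ 2) / Real.sqrt (2 * (0 ^ 2 + y ^ 2)) < 0 := by
      apply div_neg_of_neg_of_pos
      · nlinarith
      · rw [hx] at hspos; exact hspos
    linarith
  · exact absurd h2 (ne_of_gt hspos)

/-- The restriction of `ψ` to the open upper half-plane is a symplectomorphism onto
`ℝ² \ ([0,∞) × {0})`: a smooth diffeomorphism whose Jacobian determinant is `1`. -/
theorem psi_symplectomorphism :
    Set.BijOn psiMap {p : ℝ × ℝ | 0 < p.2} {p : ℝ × ℝ | ¬ (0 ≤ p.1 ∧ p.2 = 0)} ∧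
    ContDiffOn ℝ (⊤ : ℕ∞) psiMap {p : ℝ × ℝ | 0 < p.2} ∧
    (∃ ψinv : ℝ × ℝ → ℝ × ℝ,
      ContDiffOn ℝ (⊤ : ℕ∞) ψinv {p : ℝ × ℝ | ¬ (0 ≤ p.1 ∧ p.2 = 0)} ∧
      (∀ p ∈ {p : ℝ × ℝ | 0 < p.2}, ψinv (psiMap p) = p) ∧
      (∀ q ∈ {p : ℝ × ℝ | ¬ (0 ≤ p.1 ∧ p.2 = 0)}, psiMap (ψinv q) = q)) ∧
    (∀ p ∈ {p : ℝ × ℝ | 0 < p.2},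
      LinearMap.det (fderiv ℝ psiMap p).toLinearMap = 1) := by
  have hinv_mem : ∀ q ∈ {p : ℝ × ℝ | ¬ (0 ≤ p.1 ∧ p.2 = 0)},
      psiInv q ∈ {p : ℝ × ℝ | 0 < p.2} := by
    rintro ⟨a, b⟩ hq
    obtain ⟨hr, hra'⟩ := target_pos hq
    show 0 < Real.sqrt (Real.sqrt (a ^ 2 + b ^ 2)) *
        Real.sqrt (Real.sqrt (a ^ 2 + b ^ 2) - a)
    exact mul_pos (Real.sqrt_pos.mpr hr) (Real.sqrt_pos.mpr (sub_pos.mpr hra'))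
  refine ⟨⟨?_, ?_, ?_⟩, psi_smooth, ⟨psiInv, psiInv_smooth, ?_, ?_⟩, ?_⟩
  · rintro ⟨x, y⟩ hp
    exact psi_mapsTo hp
  · rintro ⟨x, y⟩ hp ⟨x', y'⟩ hp' hpq
    have h1 := psi_left_inv (x := x) (y := y) hp
    have h2 := psi_left_inv (x := x') (y := y') hp'
    rw [← h1, ← h2, hpq]
  · rintro ⟨a, b⟩ hq
    exact ⟨psiInv (a, b), hinv_mem (a, b) hq, psi_right_inv hq⟩
  · rintro ⟨x, y⟩ hp
    exact psi_left_inv hp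
  · rintro ⟨a, b⟩ hq
    exact psi_right_inv hq
  · rintro ⟨x, y⟩ hp
    have hy : (0:ℝ) < y := hp
    have h : 2 * (x ^ 2 + y ^ 2) ≠ 0 := by positivity
    rw [(hasFDerivAt_psi x y h).fderiv, det_mkCLM]
    have hsq : (Real.sqrt (2 * (x ^ 2 + y ^ 2))) ^ 2 = 2 * (x ^ 2 + y ^ 2) :=
      Real.sq_sqrt (by positivity)
    have hs : Real.sqrt (2 * (x ^ 2 + y ^ 2)) ≠ 0 := by positivity
    set s := Real.sqrt (2 * (x ^ 2 + y ^ 2)) with hsdef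
    field_simp
    linear_combination (-(s ^ 4 + s ^ 2 * (2 * (x ^ 2 + y ^ 2)) + (2 * (x ^ 2 + y ^ 2)) ^ 2)) * hsq
end

section
/- The function g₂ : B₁ → ℝ defined by g₂(c₁,…,cₙ) = ½( cₙ − (1/cₙ)·c̄/(c̄+1) + √((cₙ − (1/cₙ)·c̄/(c̄+1))² + 4) ) for cₙ > 0, where c̄ = c₁ + ⋯ + c_{n−1}, satisfies: (i) ∂g₂/∂cₙ > 0 wherever c̄ > 0; (ii) lim_{cₙ→0⁺} g₂(0,…,0,cₙ) = 1; (iii) g₂(c₁,…,c_{n−1},cₙ) → 0 as cₙ → 0⁺ when c̄ > 0; (iv) g₂(c₁,…,cₙ) → ∞ as cₙ → ∞. -/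
open Set Filter Topology

/-!
Write `a = c̄/(c̄+1)`. For `t > 0` we have `g₂(c, t) = φ(t - a/t)`, where `φ(u) = (u + √(u² + 4))/2`
is the positive root of `x² - u x - 1`. Since `φ' = φ/√(u² + 4) > 0` and `t ↦ t - a/t` has
derivative `1 + a/t² > 0`, (i) is the chain rule. For the limits: `φ(0) = 1` and the inner map is
the identity when `a = 0`; for `a > 0` it tends to `-∞` as `t → 0⁺`, where
`φ(u) = 2/(√(u² + 4) - u) → 0`; and it tends to `+∞` as `t → ∞`, where `φ(u) ≥ u`.
-/

noncomputable def posRoot (u : ℝ) : ℝ :=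
  (1 / 2) * (u + √(u ^ 2 + 4))

lemma abs_lt_sqrt_sq_add {u c : ℝ} (hc : 0 < c) : |u| < √(u ^ 2 + c) :=
  (Real.lt_sqrt (abs_nonneg u)).2 (by rw [sq_abs]; linarith)

namespace posRoot

lemma pos (u : ℝ) : 0 < posRoot u := by
  have := neg_lt_of_abs_lt (abs_lt_sqrt_sq_add (u := u) four_pos)
  unfold posRoot
  linarith

lemma self_le (u : ℝ) : u ≤ posRoot u := by
  have := lt_of_abs_lt (abs_lt_sqrt_sq_add (u := u) four_pos)
  unfold posRoot
  linarith

@[simp]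
lemma zero : posRoot 0 = 1 := by
  rw [posRoot, show (0 : ℝ) ^ 2 + 4 = 2 ^ 2 by norm_num, Real.sqrt_sq zero_lt_two.le]
  norm_num

lemma eq_two_div (u : ℝ) : posRoot u = 2 / (√(u ^ 2 + 4) - u) := by
  have hden : 0 < √(u ^ 2 + 4) - u := by
    linarith [lt_of_abs_lt (abs_lt_sqrt_sq_add (u := u) four_pos)]
  rw [posRoot, eq_div_iff hden.ne']
  linear_combination (1 / 2 : ℝ) * Real.sq_sqrt (by positivity : (0 : ℝ) ≤ u ^ 2 + 4)

lemma continuous : Continuous posRoot := by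
  unfold posRoot
  fun_prop

lemma hasDerivAt (u : ℝ) : HasDerivAt posRoot (posRoot u / √(u ^ 2 + 4)) u := by
  have hq : (0 : ℝ) < u ^ 2 + 4 := by positivity
  have hsqrt : HasDerivAt (fun x : ℝ => √(x ^ 2 + 4)) (2 * u / (2 * √(u ^ 2 + 4))) u := by
    simpa using ((hasDerivAt_pow 2 u).add_const 4).sqrt hq.ne'
  refine (((hasDerivAt_id u).add hsqrt).const_mul (1 / 2)).congr_deriv ?_
  have : √(u ^ 2 + 4) ≠ 0 := (Real.sqrt_pos.2 hq).ne'
  simp only [posRoot]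
  field_simp
  ring

lemma tendsto_atBot : Tendsto posRoot atBot (𝓝 0) := by
  have hden : Tendsto (fun u : ℝ => √(u ^ 2 + 4) - u) atBot atTop :=
    tendsto_atTop_mono (fun u => by linarith [Real.sqrt_nonneg (u ^ 2 + 4)])
      tendsto_neg_atBot_atTop
  simpa [funext eq_two_div, div_eq_mul_inv] using (hden.inv_tendsto_atTop).const_mul 2

lemma tendsto_atTop : Tendsto posRoot atTop atTop :=
  tendsto_atTop_mono self_le tendsto_id

end posRoot

lemma hasDerivAt_sub_one_div_mul (a : ℝ) {t : ℝ} (ht : t ≠ 0) :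
    HasDerivAt (fun x : ℝ => x - 1 / x * a) (1 + a / t ^ 2) t := by
  simp only [one_div]
  exact ((hasDerivAt_id' t).sub ((hasDerivAt_inv ht).mul_const a)).congr_deriv (by ring)

lemma tendsto_sub_one_div_mul_nhdsGT_zero {a : ℝ} (ha : 0 < a) :
    Tendsto (fun x : ℝ => x - 1 / x * a) (𝓝[>] 0) atBot := by
  have hx : Tendsto (fun x : ℝ => x) (𝓝[>] 0) (𝓝 0) := nhdsWithin_le_nhds
  have h : Tendsto (fun x : ℝ => -(1 / x * a)) (𝓝[>] 0) atBot := by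
    simpa only [one_div, Function.comp_def] using
      tendsto_neg_atTop_atBot.comp (tendsto_inv_nhdsGT_zero.atTop_mul_const ha)
  simpa only [sub_eq_add_neg] using hx.add_atBot h

lemma tendsto_sub_one_div_mul_atTop (a : ℝ) :
    Tendsto (fun x : ℝ => x - 1 / x * a) atTop atTop := by
  have h : Tendsto (fun x : ℝ => -(1 / x * a)) atTop (𝓝 (-(0 * a))) := by
    simpa only [one_div, Function.comp_def] using (tendsto_inv_atTop_zero.mul_const a).neg
  simpa only [sub_eq_add_neg, id] using tendsto_id.atTop_add h

/-- Properties of `g₂(c₁,…,cₙ) = ½(cₙ − (1/cₙ)·c̄/(c̄+1) + √((cₙ − (1/cₙ)·c̄/(c̄+1))² + 4))`,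
where `c̄ = c₁ + ⋯ + c_{n−1}` and the point `(c₁,…,c_{n−1},cₙ)` lies in
`B₁ = [0,∞)ⁿ \ {0}ⁿ` (first `n−1` coordinates `c : Fin m → ℝ`, last coordinate `cₙ`). -/
theorem g2_properties (m : ℕ)
    (g₂ : (Fin m → ℝ) → ℝ → ℝ)
    (hg₂ : ∀ (c : Fin m → ℝ) (t : ℝ), 0 < t →
      g₂ c t = (1 / 2) * ((t - (1 / t) * ((∑ i, c i) / ((∑ i, c i) + 1))) +
        Real.sqrt ((t - (1 / t) * ((∑ i, c i) / ((∑ i, c i) + 1))) ^ 2 + 4))) :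
    -- (i) ∂g₂/∂cₙ > 0 wherever c̄ > 0
    (∀ (c : Fin m → ℝ), (∀ i, 0 ≤ c i) → 0 < ∑ i, c i →
      ∀ t : ℝ, 0 < t → 0 < deriv (g₂ c) t) ∧
    -- (ii) lim_{cₙ→0⁺} g₂(0,…,0,cₙ) = 1
    Tendsto (g₂ 0) (nhdsWithin 0 (Set.Ioi 0)) (nhds 1) ∧
    -- (iii) g₂ → 0 as cₙ → 0⁺ when c̄ > 0
    (∀ (c : Fin m → ℝ), (∀ i, 0 ≤ c i) → 0 < ∑ i, c i →
      Tendsto (g₂ c) (nhdsWithin 0 (Set.Ioi 0)) (nhds 0)) ∧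
    -- (iv) g₂ → ∞ as cₙ → ∞
    (∀ (c : Fin m → ℝ), (∀ i, 0 ≤ c i) → Tendsto (g₂ c) atTop atTop) := by
  set a : (Fin m → ℝ) → ℝ := fun c => (∑ i, c i) / ((∑ i, c i) + 1)
  have hg : ∀ c, EqOn (fun t => posRoot (t - 1 / t * a c)) (g₂ c) (Ioi 0) :=
    fun c t ht => (hg₂ c t ht).symm
  have ha_pos : ∀ c : Fin m → ℝ, 0 < ∑ i, c i → 0 < a c := fun c hs => by positivity
  refine ⟨fun c _ hs t ht => ?_, ?_, fun c _ hs => ?_, fun c _ => ?_⟩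
  · have hD := ((posRoot.hasDerivAt _).comp t (hasDerivAt_sub_one_div_mul (a c) ht.ne'))
      |>.congr_of_eventuallyEq ((hg c).eventuallyEq_of_mem (Ioi_mem_nhds ht)).symm
    rw [hD.deriv]
    have := ha_pos c hs
    have := posRoot.pos (t - 1 / t * a c)
    positivity
  · have ha : a 0 = 0 := by simp [a]
    have hlim : Tendsto (fun t : ℝ => posRoot (t - 1 / t * a 0)) (𝓝[>] 0) (𝓝 1) := by
      simpa [ha, posRoot.zero] using
        posRoot.continuous.continuousWithinAt.tendsto (x := 0) (s := Ioi 0)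
    exact hlim.congr' ((hg 0).eventuallyEq_of_mem self_mem_nhdsWithin)
  · exact (posRoot.tendsto_atBot.comp (tendsto_sub_one_div_mul_nhdsGT_zero (ha_pos c hs))).congr'
      ((hg c).eventuallyEq_of_mem self_mem_nhdsWithin)
  · exact (posRoot.tendsto_atTop.comp (tendsto_sub_one_div_mul_atTop (a c))).congr'
      ((hg c).eventuallyEq_of_mem (Ioi_mem_atTop 0))
end
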